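/- If q_n ≤ q − 1 for infinitely many n, then the derivative of f is zero Lebesgue-almost everywhere on [0,1]; that is, the strictly increasing function f is singular. -/

import Mathlib

open Filter Topology MeasureTheory

/-!
Write `P_n = q_1 ⋯ q_n`; the level-`n` cylinder of `x` is `{w | ⌊P_n w⌋ = ⌊P_n x⌋}`, and points
of one cylinder share their first `n` digits, so `f` varies by at most `q⁻ⁿ` on it. Comparing
digits lexicographically shows that `f` is monotone, hence differentiable almost everywhere. At a
point `x < 1` where `f` is differentiable, pick in the level-`n` cylinder of `x` a point at distance
between `1 / (4 P_n)` and `1 / P_n`: the difference quotient is at most `4 P_n / qⁿ`, a product of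
factors `q_j / q ≤ 1` of which infinitely many are `≤ (q - 1) / q`, so `f'(x) = 0`.
-/

/-- Product `q_1 ⋯ q_n` of the first `n` bases (0-indexed sequence `a`). -/
noncomputable def cantorProd (a : ℕ → ℕ) (n : ℕ) : ℕ := ∏ j ∈ Finset.range n, a j

/-- The canonical Q-digit of `x` at (0-indexed) position `n`:
`ε_{n+1}(x) = ⌊q_1⋯q_{n+1} x⌋ - q_{n+1} ⌊q_1⋯q_n x⌋`. -/
noncomputable def cantorDigit (a : ℕ → ℕ) (x : ℝ) (n : ℕ) : ℤ :=
  ⌊(cantorProd a (n + 1) : ℝ) * x⌋ - (a n : ℤ) * ⌊(cantorProd a n : ℝ) * x⌋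

/-- The function `f`: for `x < 1`, `f(x) = ∑ ε_n(x)/q^n`; `f(1) = ∑ (q_n - 1)/q^n`. -/
noncomputable def cantorF (a : ℕ → ℕ) (q : ℕ) (x : ℝ) : ℝ :=
  if x < 1 then ∑' n : ℕ, (cantorDigit a x n : ℝ) / (q : ℝ) ^ (n + 1)
  else ∑' n : ℕ, ((a n : ℝ) - 1) / (q : ℝ) ^ (n + 1)

/-- `x ∈ (0,1)` is Q-rational if it is a finite sum `∑_{i=1}^m c_i/(q_1⋯q_i)`
with digits `0 ≤ c_i ≤ q_i - 1`. -/
def QRational (a : ℕ → ℕ) (x : ℝ) : Prop :=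
  x ∈ Set.Ioo (0 : ℝ) 1 ∧
    ∃ m : ℕ, 1 ≤ m ∧ ∃ c : ℕ → ℕ, (∀ i, c i < a i) ∧
      x = ∑ i ∈ Finset.range m, (c i : ℝ) / ∏ j ∈ Finset.range (i + 1), (a j : ℝ)

section DigitSeries

variable {q : ℝ} {c : ℕ → ℝ}

lemma summable_div_pow_of_abs_le (hq : 1 < q) (hc : ∀ n, |c n| ≤ q - 1) :
    Summable fun n => c n / q ^ (n + 1) := by
  have hq0 : 0 < q := zero_lt_one.trans hq
  refine Summable.of_norm_bounded
    ((summable_geometric_of_lt_one (inv_nonneg.2 hq0.le) (inv_lt_one_of_one_lt₀ hq)).mul_left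
      ((q - 1) / q)) fun n => ?_
  rw [norm_div, Real.norm_eq_abs, Real.norm_of_nonneg (pow_pos hq0 _).le, inv_pow, pow_succ]
  calc |c n| / (q ^ n * q) ≤ (q - 1) / (q ^ n * q) := by gcongr; exact hc n
    _ = (q - 1) / q * (q ^ n)⁻¹ := by field_simp

lemma hasSum_sub_one_div_pow_add (hq : 1 < q) (m : ℕ) :
    HasSum (fun n => (q - 1) / q ^ (n + m + 1)) (q ^ m)⁻¹ := by
  have hq0 : 0 < q := zero_lt_one.trans hq
  have hq1 : q - 1 ≠ 0 := sub_ne_zero.2 hq.ne'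
  have hterm : (fun n => (q - 1) / q ^ (n + m + 1)) = fun n => (q - 1) / q ^ (m + 1) * q⁻¹ ^ n := by
    funext n
    rw [inv_pow, add_right_comm, pow_add]
    field_simp
    ring
  have hsum : (q ^ m)⁻¹ = (q - 1) / q ^ (m + 1) * (1 - q⁻¹)⁻¹ := by
    field_simp
    ring
  rw [hterm, hsum]
  exact (hasSum_geometric_of_lt_one (inv_nonneg.2 hq0.le) (inv_lt_one_of_one_lt₀ hq)).mul_left _

lemma abs_tsum_div_pow_sub_sum_le (hq : 1 < q) (hc : ∀ n, |c n| ≤ q - 1) (m : ℕ) :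
    |∑' n, c n / q ^ (n + 1) - ∑ n ∈ Finset.range m, c n / q ^ (n + 1)| ≤ (q ^ m)⁻¹ := by
  have hq0 : 0 < q := zero_lt_one.trans hq
  rw [← (summable_div_pow_of_abs_le hq hc).sum_add_tsum_nat_add m, add_sub_cancel_left,
    ← Real.norm_eq_abs]
  refine tsum_of_norm_bounded (hasSum_sub_one_div_pow_add hq m) fun n => ?_
  rw [norm_div, Real.norm_eq_abs, Real.norm_of_nonneg (pow_pos hq0 _).le, add_right_comm]
  gcongr
  exact hc _

lemma abs_tsum_div_pow_le (hq : 1 < q) (hc : ∀ n, |c n| ≤ q - 1) {m : ℕ}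
    (hzero : ∀ n < m, c n = 0) : |∑' n, c n / q ^ (n + 1)| ≤ (q ^ m)⁻¹ := by
  have hhead : ∑ n ∈ Finset.range m, c n / q ^ (n + 1) = 0 :=
    Finset.sum_eq_zero fun n hn => by rw [hzero n (Finset.mem_range.1 hn), zero_div]
  simpa [hhead] using abs_tsum_div_pow_sub_sum_le hq hc m

lemma tsum_div_pow_nonneg (hq : 1 < q) (hc : ∀ n, |c n| ≤ q - 1) {m : ℕ}
    (hzero : ∀ n < m, c n = 0) (hm : 1 ≤ c m) : 0 ≤ ∑' n, c n / q ^ (n + 1) := by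
  have hq0 : 0 < q := zero_lt_one.trans hq
  have hhead : ∑ n ∈ Finset.range (m + 1), c n / q ^ (n + 1) = c m / q ^ (m + 1) := by
    rw [Finset.sum_range_succ, Finset.sum_eq_zero fun n hn => by
      rw [hzero n (Finset.mem_range.1 hn), zero_div], zero_add]
  have htail := abs_tsum_div_pow_sub_sum_le hq hc (m + 1)
  rw [hhead] at htail
  have : (q ^ (m + 1))⁻¹ ≤ c m / q ^ (m + 1) := by
    rw [inv_eq_one_div]; gcongr
  linarith [(abs_le.1 htail).1]

end DigitSeries

section CantorExpansion

variable {a : ℕ → ℕ}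

lemma cantorProd_pos (ha₀ : ∀ n, 0 < a n) (n : ℕ) : 0 < cantorProd a n :=
  Finset.prod_pos fun j _ => ha₀ j

lemma two_pow_le_cantorProd (ha : ∀ n, 2 ≤ a n) (n : ℕ) : 2 ^ n ≤ cantorProd a n := by
  simpa [cantorProd] using Finset.pow_card_le_prod (Finset.range n) a 2 fun j _ => ha j

lemma floor_cantorProd_mul_eq_ediv (ha₀ : ∀ n, 0 < a n) (x : ℝ) {j n : ℕ} (hjn : j ≤ n) :
    ⌊(cantorProd a j : ℝ) * x⌋ =
      ⌊(cantorProd a n : ℝ) * x⌋ / ((∏ i ∈ Finset.Ico j n, a i : ℕ) : ℤ) := by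
  have hM : ((∏ i ∈ Finset.Ico j n, a i : ℕ) : ℝ) ≠ 0 :=
    Nat.cast_ne_zero.2 (Finset.prod_pos fun i _ => ha₀ i).ne'
  rw [← Int.floor_div_natCast, cantorProd, cantorProd, ← Finset.prod_range_mul_prod_Ico a hjn,
    Nat.cast_mul]
  field_simp

lemma floor_cantorProd_mul_eq_of_le (ha₀ : ∀ n, 0 < a n) {u v : ℝ} {j n : ℕ} (hjn : j ≤ n)
    (h : ⌊(cantorProd a n : ℝ) * u⌋ = ⌊(cantorProd a n : ℝ) * v⌋) :
    ⌊(cantorProd a j : ℝ) * u⌋ = ⌊(cantorProd a j : ℝ) * v⌋ := by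
  rw [floor_cantorProd_mul_eq_ediv ha₀ u hjn, floor_cantorProd_mul_eq_ediv ha₀ v hjn, h]

lemma cantorDigit_eq_emod (ha₀ : ∀ n, 0 < a n) (x : ℝ) (n : ℕ) :
    cantorDigit a x n = ⌊(cantorProd a (n + 1) : ℝ) * x⌋ % (a n : ℤ) := by
  rw [Int.emod_def, cantorDigit, floor_cantorProd_mul_eq_ediv ha₀ x n.le_succ]
  simp

lemma cantorDigit_nonneg (ha₀ : ∀ n, 0 < a n) (x : ℝ) (n : ℕ) : 0 ≤ cantorDigit a x n := by
  rw [cantorDigit_eq_emod ha₀]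
  exact Int.emod_nonneg _ (by exact_mod_cast (ha₀ n).ne')

lemma cantorDigit_lt (ha₀ : ∀ n, 0 < a n) (x : ℝ) (n : ℕ) : cantorDigit a x n < a n := by
  rw [cantorDigit_eq_emod ha₀]
  exact Int.emod_lt_of_pos _ (by exact_mod_cast ha₀ n)

lemma cantorDigit_eq_of_floor_eq (ha₀ : ∀ n, 0 < a n) {u v : ℝ} {j n : ℕ} (hjn : j < n)
    (h : ⌊(cantorProd a n : ℝ) * u⌋ = ⌊(cantorProd a n : ℝ) * v⌋) :
    cantorDigit a u j = cantorDigit a v j := by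
  rw [cantorDigit, cantorDigit, floor_cantorProd_mul_eq_of_le ha₀ hjn h,
    floor_cantorProd_mul_eq_of_le ha₀ hjn.le h]

lemma lt_one_of_floor_cantorProd_mul_eq (ha₀ : ∀ n, 0 < a n) {x w : ℝ} {n : ℕ} (hx : x < 1)
    (h : ⌊(cantorProd a n : ℝ) * w⌋ = ⌊(cantorProd a n : ℝ) * x⌋) : w < 1 := by
  have hP : (0 : ℝ) < cantorProd a n := by exact_mod_cast cantorProd_pos ha₀ n
  have hx' : ⌊(cantorProd a n : ℝ) * x⌋ + 1 ≤ (cantorProd a n : ℤ) := by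
    rw [Int.add_one_le_iff, Int.floor_lt]
    push_cast
    nlinarith
  have : (cantorProd a n : ℝ) * w < cantorProd a n * 1 :=
    calc (cantorProd a n : ℝ) * w < ⌊(cantorProd a n : ℝ) * w⌋ + 1 := Int.lt_floor_add_one _
      _ ≤ cantorProd a n * 1 := by rw [h, mul_one]; exact_mod_cast hx'
  exact lt_of_mul_lt_mul_left this hP.le

end CantorExpansion

section CantorF

variable {a : ℕ → ℕ} {q : ℕ}

lemma cantorDigit_mem_Icc (ha₀ : ∀ n, 0 < a n) (haq : ∀ n, a n ≤ q) (x : ℝ) (n : ℕ) :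
    (cantorDigit a x n : ℝ) ∈ Set.Icc 0 ((q : ℝ) - 1) := by
  have hlt := cantorDigit_lt ha₀ x n
  have haq' : (a n : ℤ) ≤ q := by exact_mod_cast haq n
  have hle : cantorDigit a x n ≤ (q : ℤ) - 1 := by omega
  exact ⟨by exact_mod_cast cantorDigit_nonneg ha₀ x n, by exact_mod_cast hle⟩

lemma abs_cantorDigit_le (ha₀ : ∀ n, 0 < a n) (haq : ∀ n, a n ≤ q) (x : ℝ) (n : ℕ) :
    |(cantorDigit a x n : ℝ)| ≤ q - 1 := by
  obtain ⟨h0, h1⟩ := cantorDigit_mem_Icc ha₀ haq x n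
  rwa [abs_of_nonneg h0]

lemma abs_cantorDigit_sub_le (ha₀ : ∀ n, 0 < a n) (haq : ∀ n, a n ≤ q) (u v : ℝ) (n : ℕ) :
    |(cantorDigit a v n : ℝ) - cantorDigit a u n| ≤ q - 1 := by
  obtain ⟨hu0, hu1⟩ := cantorDigit_mem_Icc ha₀ haq u n
  obtain ⟨hv0, hv1⟩ := cantorDigit_mem_Icc ha₀ haq v n
  rw [abs_sub_le_iff]
  constructor <;> linarith

lemma cantorF_sub_cantorF (hq : 1 < q) (ha₀ : ∀ n, 0 < a n) (haq : ∀ n, a n ≤ q) {u v : ℝ}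
    (hu : u < 1) (hv : v < 1) :
    cantorF a q v - cantorF a q u =
      ∑' n, ((cantorDigit a v n : ℝ) - cantorDigit a u n) / (q : ℝ) ^ (n + 1) := by
  have hq' : (1 : ℝ) < q := Nat.one_lt_cast.2 hq
  simp only [cantorF, if_pos hu, if_pos hv, sub_div]
  exact ((summable_div_pow_of_abs_le hq' (abs_cantorDigit_le ha₀ haq v)).tsum_sub
    (summable_div_pow_of_abs_le hq' (abs_cantorDigit_le ha₀ haq u))).symm

lemma abs_cantorF_sub_le_of_floor_eq (hq : 1 < q) (ha₀ : ∀ n, 0 < a n) (haq : ∀ n, a n ≤ q)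
    {u v : ℝ} (hu : u < 1) (hv : v < 1) {n : ℕ}
    (h : ⌊(cantorProd a n : ℝ) * u⌋ = ⌊(cantorProd a n : ℝ) * v⌋) :
    |cantorF a q v - cantorF a q u| ≤ ((q : ℝ) ^ n)⁻¹ := by
  rw [cantorF_sub_cantorF hq ha₀ haq hu hv]
  exact abs_tsum_div_pow_le (Nat.one_lt_cast.2 hq) (abs_cantorDigit_sub_le ha₀ haq u v)
    fun j hj => by rw [cantorDigit_eq_of_floor_eq ha₀ hj h, sub_self]

/-- Lexicographic comparison: at the first level where the cylinders of `u ≤ v` differ, the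
digit of `u` is smaller, and the remaining digits cannot make up for it. -/
lemma cantorF_le_cantorF (hq : 1 < q) (ha₀ : ∀ n, 0 < a n) (haq : ∀ n, a n ≤ q) {u v : ℝ}
    (hu : 0 ≤ u) (huv : u ≤ v) (hv : v < 1) : cantorF a q u ≤ cantorF a q v := by
  rw [← sub_nonneg, cantorF_sub_cantorF hq ha₀ haq (huv.trans_lt hv) hv]
  by_cases hsame : ∀ n, ⌊(cantorProd a n : ℝ) * u⌋ = ⌊(cantorProd a n : ℝ) * v⌋
  · simp [cantorDigit, hsame]
  simp only [not_forall] at hsame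
  have hfind0 : Nat.find hsame ≠ 0 := by
    intro h0
    have hlevel0 := Nat.find_spec hsame
    rw [h0] at hlevel0
    simp [cantorProd, Int.floor_eq_zero_iff.2 ⟨hu, huv.trans_lt hv⟩,
      Int.floor_eq_zero_iff.2 ⟨hu.trans huv, hv⟩] at hlevel0
  obtain ⟨m, hm⟩ := Nat.exists_eq_succ_of_ne_zero hfind0
  have hagree : ⌊(cantorProd a m : ℝ) * u⌋ = ⌊(cantorProd a m : ℝ) * v⌋ :=
    not_not.1 (Nat.find_min hsame (by omega))
  have hdiffer : ⌊(cantorProd a (m + 1) : ℝ) * u⌋ ≠ ⌊(cantorProd a (m + 1) : ℝ) * v⌋ := by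
    have := Nat.find_spec hsame
    rwa [hm] at this
  have hlt : ⌊(cantorProd a (m + 1) : ℝ) * u⌋ < ⌊(cantorProd a (m + 1) : ℝ) * v⌋ :=
    (Int.floor_le_floor (mul_le_mul_of_nonneg_left huv (Nat.cast_nonneg _))).lt_of_ne hdiffer
  have hdigit : cantorDigit a u m + 1 ≤ cantorDigit a v m := by
    unfold cantorDigit
    rw [hagree]
    omega
  refine tsum_div_pow_nonneg (Nat.one_lt_cast.2 hq) (abs_cantorDigit_sub_le ha₀ haq u v)
    (fun j hj => by rw [cantorDigit_eq_of_floor_eq ha₀ hj hagree, sub_self]) ?_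
  rw [le_sub_iff_add_le']
  exact_mod_cast hdigit

lemma cantorF_le_cantorF_one (hq : 1 < q) (ha₀ : ∀ n, 0 < a n) (haq : ∀ n, a n ≤ q) {u : ℝ}
    (hu : u < 1) : cantorF a q u ≤ cantorF a q 1 := by
  have hq' : (1 : ℝ) < q := Nat.one_lt_cast.2 hq
  have hdigits : ∀ n, |(a n : ℝ) - 1| ≤ q - 1 := fun n => by
    have h1 : (1 : ℝ) ≤ a n := by exact_mod_cast ha₀ n
    have h2 : (a n : ℝ) ≤ q := by exact_mod_cast haq n
    rw [abs_of_nonneg (by linarith)]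
    linarith
  simp only [cantorF, if_pos hu, lt_irrefl, if_false]
  refine Summable.tsum_le_tsum (fun n => ?_) (summable_div_pow_of_abs_le hq'
    (abs_cantorDigit_le ha₀ haq u)) (summable_div_pow_of_abs_le hq' hdigits)
  have hlt : cantorDigit a u n + 1 ≤ a n := cantorDigit_lt ha₀ u n
  gcongr
  rw [le_sub_iff_add_le]
  exact_mod_cast hlt

lemma monotoneOn_cantorF (hq : 1 < q) (ha₀ : ∀ n, 0 < a n) (haq : ∀ n, a n ≤ q) :
    MonotoneOn (cantorF a q) (Set.Icc 0 1) := by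
  intro u hu v hv huv
  rcases hv.2.lt_or_eq with hv1 | rfl
  · exact cantorF_le_cantorF hq ha₀ haq hu.1 huv hv1
  rcases hu.2.lt_or_eq with hu1 | rfl
  · exact cantorF_le_cantorF_one hq ha₀ haq hu1
  · exact le_rfl

end CantorF

lemma prod_range_le_pow_count {b : ℕ → ℝ} {r : ℝ} [DecidablePred fun j => b j ≤ r]
    (hb0 : ∀ n, 0 ≤ b n) (hb1 : ∀ n, b n ≤ 1) (n : ℕ) :
    ∏ j ∈ Finset.range n, b j ≤ r ^ Nat.count (fun j => b j ≤ r) n := by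
  induction n with
  | zero => simp
  | succ n ih =>
    rw [Finset.prod_range_succ, Nat.count_succ]
    split_ifs with h
    · rw [pow_succ]
      exact mul_le_mul ih h (hb0 n) (pow_nonneg ((hb0 n).trans h) _)
    · rw [add_zero, ← mul_one (r ^ _)]
      exact mul_le_mul ih (hb1 n) (hb0 n) ((Finset.prod_nonneg fun j _ => hb0 j).trans ih)

lemma tendsto_prod_range_of_infinite_le {b : ℕ → ℝ} {r : ℝ} (hb0 : ∀ n, 0 ≤ b n)
    (hb1 : ∀ n, b n ≤ 1) (hr : r < 1) (hinf : {n | b n ≤ r}.Infinite) :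
    Tendsto (fun n => ∏ j ∈ Finset.range n, b j) atTop (𝓝 0) := by
  classical
  obtain ⟨n₀, hn₀⟩ := hinf.nonempty
  have hcount : Tendsto (Nat.count fun j => b j ≤ r) atTop atTop :=
    tendsto_atTop_atTop_of_monotone (Nat.count_monotone _) fun k =>
      ⟨Nat.nth _ k, (Nat.count_nth_of_infinite hinf k).ge⟩
  exact squeeze_zero (fun n => Finset.prod_nonneg fun j _ => hb0 j)
    (prod_range_le_pow_count hb0 hb1)
    ((tendsto_pow_atTop_nhds_zero_of_lt_one ((hb0 n₀).trans hn₀) hr).comp hcount)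

lemma tendsto_cantorProd_div_pow {a : ℕ → ℕ} {q : ℕ} (hq : 0 < q) (haq : ∀ n, a n ≤ q)
    (hinf : {n | a n ≤ q - 1}.Infinite) :
    Tendsto (fun n => (cantorProd a n : ℝ) / (q : ℝ) ^ n) atTop (𝓝 0) := by
  have hq' : (0 : ℝ) < q := by exact_mod_cast hq
  have hprod : ∀ n, (cantorProd a n : ℝ) / (q : ℝ) ^ n = ∏ j ∈ Finset.range n, (a j : ℝ) / q :=
    fun n => by simp [cantorProd, Finset.prod_div_distrib]
  simp_rw [hprod]
  refine tendsto_prod_range_of_infinite_le (r := ((q : ℝ) - 1) / q) (fun n => by positivity)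
    (fun n => div_le_one_of_le₀ (by exact_mod_cast haq n) hq'.le)
    ((div_lt_one hq').2 (by linarith)) (hinf.mono fun n hn => ?_)
  have hn : a n ≤ q - 1 := hn
  have : (a n : ℝ) + 1 ≤ q := by exact_mod_cast (by omega : a n + 1 ≤ q)
  show (a n : ℝ) / q ≤ ((q : ℝ) - 1) / q
  gcongr
  linarith

lemma exists_floor_eq_quarter_le_abs_sub (y : ℝ) : ∃ z, ⌊z⌋ = ⌊y⌋ ∧ 1 / 4 ≤ |z - y| := by
  have hy := Int.floor_add_fract y
  rcases lt_or_ge (Int.fract y) (1 / 2) with h | h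
  · refine ⟨⌊y⌋ + 3 / 4, ?_, ?_⟩
    · rw [Int.floor_intCast_add, add_eq_left, Int.floor_eq_zero_iff]
      norm_num
    · rw [abs_of_pos (by linarith)]
      linarith
  · refine ⟨⌊y⌋, Int.floor_intCast _, ?_⟩
    rw [abs_sub_comm, abs_of_nonneg (by linarith)]
    linarith

lemma exists_floor_mul_eq_le_abs_sub {P : ℝ} (hP : 0 < P) (x : ℝ) :
    ∃ w, ⌊P * w⌋ = ⌊P * x⌋ ∧ (4 * P)⁻¹ ≤ |w - x| := by
  obtain ⟨z, hz, hzx⟩ := exists_floor_eq_quarter_le_abs_sub (P * x)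
  refine ⟨z / P, by rwa [mul_div_cancel₀ _ hP.ne'], ?_⟩
  have : z / P - x = (z - P * x) / P := by field_simp
  calc (4 * P)⁻¹ = 1 / 4 / P := by field_simp
    _ ≤ |z / P - x| := by rw [this, abs_div, abs_of_pos hP]; gcongr

lemma HasDerivAt.eq_zero_of_abs_sub_le {f : ℝ → ℝ} {f' x : ℝ} (hf : HasDerivAt f f' x)
    {w ε : ℕ → ℝ} (hw : Tendsto w atTop (𝓝 x)) (hwx : ∀ n, w n ≠ x)
    (hε : Tendsto ε atTop (𝓝 0)) (hbound : ∀ n, |f (w n) - f x| ≤ ε n * |w n - x|) :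
    f' = 0 := by
  have hw' : Tendsto w atTop (𝓝[≠] x) :=
    tendsto_nhdsWithin_of_tendsto_nhds_of_eventually_within _ hw (Eventually.of_forall hwx)
  refine tendsto_nhds_unique ((hasDerivAt_iff_tendsto_slope.1 hf).comp hw')
    (squeeze_zero_norm (fun n => ?_) hε)
  rw [Function.comp_apply, slope_def_field, norm_div, Real.norm_eq_abs, Real.norm_eq_abs,
    div_le_iff₀ (abs_pos.2 (sub_ne_zero.2 (hwx n)))]
  exact hbound n

lemma eq_zero_of_hasDerivAt_cantorF {a : ℕ → ℕ} {q : ℕ} (hq : 1 < q) (ha : ∀ n, 2 ≤ a n)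
    (haq : ∀ n, a n ≤ q) (hinf : {n | a n ≤ q - 1}.Infinite) {x f' : ℝ} (hx : x < 1)
    (hf : HasDerivAt (cantorF a q) f' x) : f' = 0 := by
  have ha₀ : ∀ n, 0 < a n := fun n => two_pos.trans_le (ha n)
  have hP : ∀ n, (0 : ℝ) < cantorProd a n := fun n => by exact_mod_cast cantorProd_pos ha₀ n
  choose w hwfloor hwdist using fun n => exists_floor_mul_eq_le_abs_sub (hP n) x
  have hwx : ∀ n, |w n - x| ≤ (cantorProd a n : ℝ)⁻¹ := fun n => by
    have := Int.abs_sub_lt_one_of_floor_eq_floor (hwfloor n)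
    rw [← mul_sub, abs_mul, abs_of_pos (hP n)] at this
    rw [← one_div, le_div_iff₀ (hP n), mul_comm]
    exact this.le
  have hPinv : Tendsto (fun n => (cantorProd a n : ℝ)⁻¹) atTop (𝓝 0) :=
    tendsto_inv_atTop_zero.comp <| tendsto_natCast_atTop_atTop.comp <|
      tendsto_atTop_mono (fun n => (Nat.lt_two_pow_self).le.trans (two_pow_le_cantorProd ha n))
        tendsto_id
  refine hf.eq_zero_of_abs_sub_le (ε := fun n => 4 * ((cantorProd a n : ℝ) / (q : ℝ) ^ n))
    (tendsto_iff_dist_tendsto_zero.2 (squeeze_zero (fun _ => dist_nonneg) hwx hPinv))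
    (fun n => sub_ne_zero.1 (abs_pos.1 ((inv_pos.2 (by linarith [hP n])).trans_le (hwdist n))))
    (by simpa using (tendsto_cantorProd_div_pow (by omega) haq hinf).const_mul 4) fun n => ?_
  calc |cantorF a q (w n) - cantorF a q x|
      ≤ ((q : ℝ) ^ n)⁻¹ :=
        abs_cantorF_sub_le_of_floor_eq hq ha₀ haq hx
          (lt_one_of_floor_cantorProd_mul_eq ha₀ hx (hwfloor n)) (hwfloor n).symm
    _ = 4 * ((cantorProd a n : ℝ) / (q : ℝ) ^ n) * (4 * (cantorProd a n : ℝ))⁻¹ := by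
        field_simp [(hP n).ne']
    _ ≤ 4 * ((cantorProd a n : ℝ) / (q : ℝ) ^ n) * |w n - x| := by
        gcongr
        exact hwdist n

/-- if `q_n ≤ q - 1` for infinitely many `n`, then the derivative of the
strictly increasing function `f` is zero Lebesgue-almost everywhere on `[0,1]`
(`f` is singular). -/
theorem stmt7 (q : ℕ) (hq : 2 ≤ q) (a : ℕ → ℕ) (ha : ∀ n, 2 ≤ a n ∧ a n ≤ q)
    (hinf : {n : ℕ | a n ≤ q - 1}.Infinite) :
    ∀ᵐ x ∂(volume : Measure ℝ), x ∈ Set.Icc (0 : ℝ) 1 →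
      HasDerivAt (cantorF a q) 0 x := by
  have hmono := monotoneOn_cantorF hq (fun n => two_pos.trans_le (ha n).1) fun n => (ha n).2
  filter_upwards [hmono.ae_differentiableWithinAt_of_mem,
    (Ioo_ae_eq_Icc (μ := volume) (a := (0 : ℝ)) (b := 1)).mem_iff] with x hdiff hIoo hx
  have hx' : x ∈ Set.Ioo 0 1 := hIoo.2 hx
  have hD := ((hdiff hx).differentiableAt (Icc_mem_nhds hx'.1 hx'.2)).hasDerivAt
  rwa [eq_zero_of_hasDerivAt_cantorF hq (fun n => (ha n).1) (fun n => (ha n).2) hinf hx'.2 hD]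
    at hD
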